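/- arXiv:1201.2589 — 2 statements merged into one kernel-verified Lean document; each statement's English description precedes it below -/
import Mathlib

section
/- Let E be a Banach space and T : E → E a compact linear operator. Then every nonzero element of the spectrum of T is an eigenvalue of T. -/
/-- Every nonzero element of the spectrum of a compact operator on a complex
Banach space is an eigenvalue. -/
theorem compact_operator_spectrum_eq_eigenvalues
    {E : Type*} [NormedAddCommGroup E] [NormedSpace ℂ E] [CompleteSpace E]
    (T : E →L[ℂ] E) (hT : IsCompactOperator T) :
    ∀ z ∈ spectrum ℂ T, z ≠ 0 → ∃ x : E, x ≠ 0 ∧ T x = z • x := by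
  intro z hz hz0
  obtain ⟨x, hx⟩ := ((hT.hasEigenvalue_iff_mem_spectrum hz0).mpr hz).exists_hasEigenvector
  exact ⟨x, hx.2, Module.End.mem_eigenspace_iff.mp hx.1⟩
end

section
/- Let f : ℝ≥0 → ℝ≥0 be continuous, θ ∈ [0,1), and suppose f(t) ≤ C t^{-θ} + K ∫₀ᵗ f(s) ds for all t > 0, where C, K ≥ 0. Then there is a constant N (depending only on θ, K) such that f(t) ≤ N C t^{-θ} e^{2Kt} for all t > 0. -/
/-!
With `G x = ∫₀ˣ f`, the hypothesis reads `G' - K G ≤ C x^{-θ}` on `(0, t)`. Hence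
`x ↦ C x^{1-θ}/(1-θ) - e^{-Kx} G x` is nondecreasing, and it vanishes at `0` because `θ < 1`;
this gives `G t ≤ C t^{1-θ} e^{Kt}/(1-θ)`. Inserting this bound into the hypothesis and using
`K t ≤ e^{Kt}` yields the claim with `N = 1 + 1/(1-θ)`.
-/

open MeasureTheory intervalIntegral Set

theorem hasDerivAt_rpow_div_self {p x : ℝ} (hp : p ≠ 0) (hx : 0 < x) :
    HasDerivAt (fun y : ℝ => y ^ p / p) (x ^ (p - 1)) x :=
  ((Real.hasDerivAt_rpow_const (Or.inl hx.ne')).div_const p).congr_deriv (by field_simp)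

theorem exp_neg_mul_mul_sub_le_of_deriv_sub_mul_le {G G' P g : ℝ → ℝ} {K t : ℝ}
    (hK : 0 ≤ K) (ht : 0 ≤ t) (hG : ContinuousOn G (Icc 0 t)) (hP : ContinuousOn P (Icc 0 t))
    (hG' : ∀ x ∈ Ioo 0 t, HasDerivAt G (G' x) x) (hP' : ∀ x ∈ Ioo 0 t, HasDerivAt P (g x) x)
    (hg : ∀ x ∈ Ioo 0 t, 0 ≤ g x) (hle : ∀ x ∈ Ioo 0 t, G' x - K * G x ≤ g x) :
    Real.exp (-K * t) * G t - G 0 ≤ P t - P 0 := by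
  let ψ x := P x - Real.exp (-K * x) * G x
  have hexp : ∀ x, HasDerivAt (fun y => Real.exp (-K * y)) (Real.exp (-K * x) * -K) x := fun x =>
    by simpa using ((hasDerivAt_id x).const_mul (-K)).exp
  have hψ : MonotoneOn ψ (Icc 0 t) := by
    refine monotoneOn_of_hasDerivWithinAt_nonneg (convex_Icc 0 t)
      (hP.sub ((Real.continuous_exp.comp (continuous_const_mul (-K))).continuousOn.mul hG))
      (f' := fun x => g x - Real.exp (-K * x) * (G' x - K * G x)) (fun x hx => ?_) fun x hx => ?_
    · rw [interior_Icc] at hx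
      exact ((hP' x hx).sub ((hexp x).mul (hG' x hx))).hasDerivWithinAt.congr_deriv (by ring)
    · rw [interior_Icc] at hx
      have hdecay : Real.exp (-K * x) ≤ 1 := Real.exp_le_one_iff.2 (by nlinarith [hx.1])
      have hweighted : Real.exp (-K * x) * (G' x - K * G x) ≤ g x := by
        rcases le_total 0 (G' x - K * G x) with h | h
        · exact (mul_le_of_le_one_left h hdecay).trans (hle x hx)
        · exact (mul_nonpos_of_nonneg_of_nonpos (Real.exp_pos _).le h).trans (hg x hx)
      exact sub_nonneg.2 hweighted
  have hψt := hψ (left_mem_Icc.2 ht) (right_mem_Icc.2 ht) ht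
  simp only [ψ, mul_zero, Real.exp_zero, one_mul] at hψt
  linarith

theorem mul_exp_le_exp_two_mul (x : ℝ) : x * Real.exp x ≤ Real.exp (2 * x) := by
  rw [two_mul, Real.exp_add]
  exact mul_le_mul_of_nonneg_right (by linarith [Real.add_one_le_exp x]) (Real.exp_pos x).le

theorem integral_le_of_le_rpow_add_mul_integral {f : ℝ → ℝ} {C K θ t : ℝ} (hC : 0 ≤ C)
    (hK : 0 ≤ K) (hθ : θ < 1) (ht : 0 < t) (hfc : ContinuousOn f (Ioi 0))
    (hfi : IntervalIntegrable f volume 0 t)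
    (hle : ∀ x ∈ Ioo 0 t, f x ≤ C * x ^ (-θ) + K * ∫ s in 0..x, f s) :
    ∫ s in 0..t, f s ≤ C * (t ^ (1 - θ) / (1 - θ)) * Real.exp (K * t) := by
  have h1θ : 0 < 1 - θ := by linarith
  have hbound := exp_neg_mul_mul_sub_le_of_deriv_sub_mul_le hK ht.le
    (G := fun x => ∫ s in 0..x, f s) (P := fun x => C * (x ^ (1 - θ) / (1 - θ)))
    (by simpa [uIcc_of_le ht.le] using continuousOn_primitive_interval' hfi left_mem_uIcc)
    (continuousOn_const.mul ((continuousOn_id.rpow_const fun _ _ => Or.inr h1θ.le).div_const _))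
    (fun x hx => integral_hasDerivAt_right
      (hfi.mono_set (uIcc_subset_uIcc_left (Ioo_subset_Icc_self.trans Icc_subset_uIcc hx)))
      (hfc.stronglyMeasurableAtFilter isOpen_Ioi x hx.1) (hfc.continuousAt (Ioi_mem_nhds hx.1)))
    (fun x hx => by
      simpa using (hasDerivAt_rpow_div_self h1θ.ne' hx.1).const_mul C)
    (fun x hx => mul_nonneg hC (Real.rpow_nonneg hx.1.le _)) (fun x hx => by linarith [hle x hx])
  simp only [integral_same, mul_zero, sub_zero, Real.zero_rpow h1θ.ne', zero_div] at hbound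
  calc ∫ s in 0..t, f s = Real.exp (-K * t) * (∫ s in 0..t, f s) * Real.exp (K * t) := by
        rw [mul_comm (Real.exp _), mul_assoc, ← Real.exp_add]; simp
    _ ≤ C * (t ^ (1 - θ) / (1 - θ)) * Real.exp (K * t) := by gcongr

theorem singular_gronwall_general (θ K : ℝ) (hθ1 : θ < 1) (hK : 0 ≤ K) :
    ∃ N : ℝ, 0 < N ∧ ∀ (C : ℝ) (f : ℝ → ℝ), 0 ≤ C →
      ContinuousOn f (Set.Ioi 0) →
      (∀ t ∈ Set.Ioi (0:ℝ), 0 ≤ f t) →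
      (∀ t > (0:ℝ), IntervalIntegrable f volume 0 t) →
      (∀ t > (0:ℝ), f t ≤ C * t ^ (-θ) + K * ∫ s in (0:ℝ)..t, f s) →
      ∀ t > (0:ℝ), f t ≤ N * C * t ^ (-θ) * Real.exp (2 * K * t) := by
  have h1θ : 0 < 1 - θ := by linarith
  refine ⟨1 + 1 / (1 - θ), by positivity, fun C f hC hfc _ hfi hle t ht => ?_⟩
  have hint := integral_le_of_le_rpow_add_mul_integral hC hK hθ1 ht hfc (hfi t ht)
    fun x hx => hle x hx.1
  have hrpow : t ^ (1 - θ) = t * t ^ (-θ) := by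
    rw [sub_eq_add_neg, Real.rpow_add ht, Real.rpow_one]
  have hKt := mul_exp_le_exp_two_mul (K * t)
  have hexp : 1 ≤ Real.exp (2 * (K * t)) := Real.one_le_exp (by positivity)
  have hCt : 0 ≤ C * t ^ (-θ) := by positivity
  calc f t ≤ C * t ^ (-θ) + K * ∫ s in 0..t, f s := hle t ht
    _ ≤ C * t ^ (-θ) + K * (C * (t ^ (1 - θ) / (1 - θ)) * Real.exp (K * t)) := by gcongr
    _ = C * t ^ (-θ) + C * t ^ (-θ) / (1 - θ) * (K * t * Real.exp (K * t)) := by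
        rw [hrpow]; ring
    _ ≤ C * t ^ (-θ) * Real.exp (2 * (K * t))
        + C * t ^ (-θ) / (1 - θ) * Real.exp (2 * (K * t)) :=
        add_le_add (le_mul_of_one_le_right hCt hexp) (mul_le_mul_of_nonneg_left hKt (by positivity))
    _ = (1 + 1 / (1 - θ)) * C * t ^ (-θ) * Real.exp (2 * K * t) := by ring_nf

/-- Singular Gronwall inequality: if `f` is continuous and nonnegative on
`(0,∞)` and satisfies `f t ≤ C t^{-θ} + K ∫₀ᵗ f` for all `t > 0`, where
`θ ∈ [0,1)` and `C, K ≥ 0`, then there is `N = N(θ, K) > 0` such that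
`f t ≤ N C t^{-θ} e^{2Kt}` for all `t > 0`. -/
theorem singular_gronwall (θ K : ℝ) (hθ0 : 0 ≤ θ) (hθ1 : θ < 1) (hK : 0 ≤ K) :
    ∃ N : ℝ, 0 < N ∧ ∀ (C : ℝ) (f : ℝ → ℝ), 0 ≤ C →
      ContinuousOn f (Set.Ioi 0) →
      (∀ t ∈ Set.Ioi (0:ℝ), 0 ≤ f t) →
      (∀ t > (0:ℝ), IntervalIntegrable f volume 0 t) →
      (∀ t > (0:ℝ), f t ≤ C * t ^ (-θ) + K * ∫ s in (0:ℝ)..t, f s) →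
      ∀ t > (0:ℝ), f t ≤ N * C * t ^ (-θ) * Real.exp (2 * K * t) :=
  singular_gronwall_general θ K hθ1 hK
end
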